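/- arXiv:1904.01398 — 2 statements merged into one kernel-verified Lean document; each statement's English description precedes it below -/
import Mathlib

section
/- Let (X,d) be a metric space with basepoint x₀, f : X → X a semicontraction with translation number τ = lim (1/n) d(x₀, fⁿ(x₀)). Then there exists a metric functional h in the pointwise closure of {y ↦ d(y,x) − d(x₀,x) : x ∈ X} such that h(f^k(x₀)) ≤ −τ·k for all k ≥ 1. -/
open Filter Topology

/-- Karlsson's metric spectral principle: there is a metric functional `h` in the
metric compactification with `h(fᵏ(x₀)) ≤ -τ k` for all `k ≥ 1`. -/
theorem metric_spectral_principle {X : Type*} [MetricSpace X] (x₀ : X)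
    (f : X → X) (hf : LipschitzWith 1 f) (τ : ℝ)
    (hτ : Tendsto (fun n : ℕ => dist x₀ (f^[n] x₀) / n) atTop (nhds τ)) :
    ∃ h ∈ closure (Set.range (fun x : X => fun y : X => dist y x - dist x₀ x)),
      ∀ k : ℕ, 1 ≤ k → h (f^[k] x₀) ≤ -τ * k := by
  classical
  set a : ℕ → ℝ := fun n => dist x₀ (f^[n] x₀) with ha
  have hiter : ∀ (m : ℕ) (x y : X), dist (f^[m] x) (f^[m] y) ≤ dist x y := by
    intro m x y
    have := (hf.iterate m).dist_le_mul x y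
    simpa using this
  have hsub : Subadditive a := by
    intro m n
    calc a (m + n) = dist x₀ (f^[m] (f^[n] x₀)) := by
          rw [ha]; simp [Function.iterate_add_apply]
      _ ≤ dist x₀ (f^[m] x₀) + dist (f^[m] x₀) (f^[m] (f^[n] x₀)) := dist_triangle _ _ _
      _ ≤ a m + a n := by
          have := hiter m x₀ (f^[n] x₀)
          exact add_le_add le_rfl this
  have hbdd : BddBelow (Set.range fun n : ℕ => a n / n) := by
    refine ⟨0, ?_⟩
    rintro x ⟨n, rfl⟩
    positivity
  have hτeq : τ = hsub.lim := tendsto_nhds_unique hτ (hsub.tendsto_lim hbdd)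
  -- lower bound: a n ≥ τ n
  have haτ : ∀ n : ℕ, τ * n ≤ a n := by
    intro n
    rcases Nat.eq_zero_or_pos n with hn | hn
    · subst hn; simp [ha]
    · have h1 : τ ≤ a n / n := hτeq ▸ hsub.lim_le_div hbdd hn.ne'
      have hn' : (0 : ℝ) < n := by exact_mod_cast hn
      calc τ * n ≤ (a n / n) * n := by nlinarith
        _ = a n := by field_simp
  -- record times
  have hrec : ∀ i : ℕ, ∃ N : ℕ, i < N ∧
      ∀ k ≤ N, a k - (τ - 1 / (i + 1)) * k ≤ a N - (τ - 1 / (i + 1)) * N := by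
    intro i
    set c : ℝ := τ - 1 / (i + 1) with hc
    set g : ℕ → ℝ := fun n => a n - c * n with hg
    have hglb : ∀ n : ℕ, (n : ℝ) / (i + 1) ≤ g n := by
      intro n
      have := haτ n
      have hi : (0 : ℝ) < (i : ℝ) + 1 := by positivity
      simp only [hg, hc]
      have h2 : (n : ℝ) * (1 / (i + 1)) ≤ a n - (τ - 1 / (i + 1)) * n := by nlinarith
      have h3 : (n : ℝ) / (i + 1) = n * (1 / (i + 1)) := by ring
      linarith [h2, h3.le, h3.ge]
    have hgtop : Tendsto g atTop atTop := by
      refine tendsto_atTop_mono hglb ?_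
      apply Tendsto.atTop_div_const (by positivity)
      exact tendsto_natCast_atTop_atTop
    set B : ℝ := (Finset.range (i + 1)).sup' (by simp) g with hB
    obtain ⟨M, hM⟩ := (hgtop.eventually_gt_atTop B).exists
    obtain ⟨N, hNmem, hNmax⟩ := Finset.exists_max_image (Finset.range (M + 1)) g
      ⟨M, by simp⟩
    refine ⟨N, ?_, ?_⟩
    · by_contra hcon
      push_neg at hcon
      have hNB : g N ≤ B := Finset.le_sup' g (by simp [Nat.lt_succ_iff.mpr hcon])
      have := hNmax M (by simp)
      linarith
    · intro k hk
      have hkN : k ∈ Finset.range (M + 1) := by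
        simp only [Finset.mem_range] at hNmem ⊢
        omega
      exact sub_le_sub (by simpa [hg] using hNmax k hkN) le_rfl |>.trans (by simp)
  choose n hn1 hn2 using hrec
  set u : ℕ → X → ℝ := fun i y => dist y (f^[n i] x₀) - dist x₀ (f^[n i] x₀) with hu
  -- key inequality
  have hkey : ∀ i k : ℕ, 1 ≤ k → k ≤ n i →
      u i (f^[k] x₀) ≤ -(τ - 1 / (i + 1)) * k := by
    intro i k hk1 hkn
    set c : ℝ := τ - 1 / (i + 1) with hc
    have hsplit : f^[n i] x₀ = f^[k] (f^[n i - k] x₀) := by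
      rw [← Function.iterate_add_apply]
      congr 1
      omega
    have h1 : dist (f^[k] x₀) (f^[n i] x₀) ≤ a (n i - k) := by
      rw [hsplit]
      exact hiter k x₀ (f^[n i - k] x₀)
    have h2 := hn2 i (n i - k) (by omega)
    have hcast : ((n i - k : ℕ) : ℝ) = (n i : ℝ) - (k : ℝ) := by
      push_cast [Nat.cast_sub hkn]; ring
    rw [hcast] at h2
    have : u i (f^[k] x₀) ≤ a (n i - k) - a (n i) := by
      simp only [hu]
      have : a (n i) = dist x₀ (f^[n i] x₀) := rfl
      linarith [h1]
    calc u i (f^[k] x₀) ≤ a (n i - k) - a (n i) := this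
      _ ≤ -c * k := by rw [hc]; linarith [h2]
  -- compactness
  set S : Set (X → ℝ) := { g : X → ℝ | ∀ y, g y ∈ Set.Icc (-(dist y x₀)) (dist y x₀) }
    with hS
  have hScomp : IsCompact S := isCompact_pi_infinite fun y => isCompact_Icc
  have huS : ∀ i, u i ∈ S := by
    intro i y
    have := abs_dist_sub_le y x₀ (f^[n i] x₀)
    rw [abs_le] at this
    exact ⟨by simpa [hu] using this.1, by simpa [hu] using this.2⟩
  obtain ⟨h, hhS, hcl⟩ := hScomp.exists_clusterPt (f := Filter.map u atTop)
    (le_principal_iff.mpr (mem_map.mpr (Eventually.of_forall huS)))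
  refine ⟨h, ?_, ?_⟩
  · rw [mem_closure_iff_clusterPt]
    refine hcl.mono (le_principal_iff.mpr (mem_map.mpr ?_))
    exact Eventually.of_forall fun i => ⟨f^[n i] x₀, rfl⟩
  · intro k hk
    -- cluster point of evaluations
    have hev : ClusterPt (h (f^[k] x₀)) (Filter.map (fun i => u i (f^[k] x₀)) atTop) := by
      have := hcl.map (continuous_apply (f^[k] x₀)).continuousAt
        (tendsto_map (f := fun g : X → ℝ => g (f^[k] x₀)))
      rwa [Filter.map_map] at this
    -- bound via closed sets
    have hbound : ∀ δ : ℝ, 0 < δ → h (f^[k] x₀) ≤ -τ * k + δ := by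
      intro δ hδ
      have hev' : ∀ᶠ i in atTop, u i (f^[k] x₀) ≤ -τ * k + δ := by
        obtain ⟨I, hI⟩ := (tendsto_natCast_atTop_atTop (R := ℝ)).eventually_ge_atTop
          ((k : ℝ) / δ) |>.exists_forall_of_atTop
        filter_upwards [eventually_ge_atTop (max k I)] with i hi
        have hik : k ≤ n i := le_trans (le_trans (le_max_left k I) hi) (hn1 i).le
        have h1 := hkey i k hk hik
        have hIi : ((k : ℝ) / δ) ≤ (i : ℝ) := hI i (le_trans (le_max_right k I) hi)
        have hi1 : (0 : ℝ) < (i : ℝ) + 1 := by positivity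
        have h2 : (k : ℝ) / (i + 1) ≤ δ := by
          rw [div_le_iff₀ hi1]
          have : (k : ℝ) ≤ δ * i := by
            rw [div_le_iff₀ hδ] at hIi
            linarith
          nlinarith
        have : -(τ - 1 / (i + 1)) * k = -τ * k + k / (i + 1) := by ring
        rw [this] at h1
        exact h1.trans (add_le_add le_rfl h2)
      have hle : Filter.map (fun i => u i (f^[k] x₀)) atTop ≤
          Filter.principal (Set.Iic (-τ * k + δ)) :=
        le_principal_iff.mpr hev'
      have := (hev.mono hle)
      have hmem : h (f^[k] x₀) ∈ closure (Set.Iic (-τ * k + δ)) :=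
        mem_closure_iff_clusterPt.mpr this
      rwa [closure_Iic] at hmem
    by_contra hcon
    push_neg at hcon
    have := hbound ((h (f^[k] x₀) - (-τ * k)) / 2) (by linarith)
    linarith
end

section
/- Let (X,d) be a metric space with basepoint x₀ and f : X → X an isometry. Let τ⁻ = lim_{n→∞} (1/n) d(x₀, f^{-n}(x₀)) be the translation number of f⁻¹. Then there exists a metric functional h in the pointwise closure of {y ↦ d(y,x) − d(x₀,x) : x ∈ X} such that h(f^{-n}(x₀)) ≤ −τ⁻ · n for all n ≥ 1. -/
open Filter Topology

private theorem karlsson_record' (a : ℕ → ℝ) (c : ℝ)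
    (h : Tendsto (fun n => a n - c * n) atTop atTop) (N : ℕ) :
    ∃ n, N ≤ n ∧ ∀ j ≤ n, a n - a j ≥ c * ((n : ℝ) - (j : ℝ)) := by
  set b : ℕ → ℝ := fun n => a n - c * n with hb
  obtain ⟨B, hBmem, hB⟩ := (Finset.range (N+1)).exists_max_image b ⟨0, by simp⟩
  obtain ⟨T0, hT0⟩ := (tendsto_atTop.1 h (b B + 1)).exists_forall_of_atTop
  set T := max T0 N with hT
  obtain ⟨n, hnmem, hn⟩ := (Finset.range (T+1)).exists_max_image b ⟨0, by simp⟩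
  have hbn : b B + 1 ≤ b n := le_trans (hT0 T (le_max_left _ _))
    (hn T (Finset.mem_range.2 (Nat.lt_succ_self _)))
  have hNn : N ≤ n := by
    by_contra hc
    push_neg at hc
    have := hB n (Finset.mem_range.2 (by omega))
    linarith
  refine ⟨n, hNn, fun j hj => ?_⟩
  have hjb : b j ≤ b n := by
    refine hn j (Finset.mem_range.2 ?_)
    have : n < T + 1 := Finset.mem_range.1 hnmem
    omega
  simp only [hb] at hjb
  nlinarith

private theorem karlsson_selection' (a : ℕ → ℝ) (τ : ℝ)
    (hτ : Tendsto (fun n : ℕ => a n / n) atTop (nhds τ)) (m : ℕ) :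
    ∃ n, m ≤ n ∧ ∀ j ≤ n, a n - a j ≥ (τ - 1/(m+1)) * ((n : ℝ) - (j : ℝ)) := by
  apply karlsson_record'
  set ε : ℝ := 1/((m : ℝ)+1) with hε
  have hεpos : 0 < ε := by positivity
  have h1 : ∀ᶠ n : ℕ in atTop, τ - ε/2 ≤ a n / n :=
    hτ.eventually (eventually_ge_nhds (by linarith : τ - ε/2 < τ))
  have hev : ∀ᶠ n : ℕ in atTop, (ε/2) * n ≤ a n - (τ - ε) * n := by
    filter_upwards [h1, eventually_ge_atTop 1] with n hn hn1
    have hnpos : (0:ℝ) < n := by exact_mod_cast hn1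
    have : (τ - ε/2) * n ≤ a n := by
      rw [le_div_iff₀ hnpos] at hn
      linarith
    nlinarith
  exact tendsto_atTop_mono' _ hev
    (tendsto_natCast_atTop_atTop.const_mul_atTop (by positivity))

/-- Metric spectral principle applied to the inverse of an isometry. -/
theorem metric_spectral_principle_isometry_inverse {X : Type*} [MetricSpace X]
    (x₀ : X) (f : X ≃ᵢ X) (τ : ℝ)
    (hτ : Tendsto (fun n : ℕ => dist x₀ (f.symm^[n] x₀) / n) atTop (nhds τ)) :
    ∃ h ∈ closure (Set.range (fun x : X => fun y : X => dist y x - dist x₀ x)),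
      ∀ n : ℕ, 1 ≤ n → h (f.symm^[n] x₀) ≤ -τ * n := by
  classical
  set Φ : X → X → ℝ := fun x : X => fun y : X => dist y x - dist x₀ x with hΦ
  have hiso : ∀ m : ℕ, Isometry (f.symm^[m]) := by
    intro m
    induction m with
    | zero => simpa using isometry_id
    | succ m ih =>
      rw [Function.iterate_succ]
      exact ih.comp f.symm.isometry
  have hdist : ∀ k n : ℕ, k ≤ n →
      dist (f.symm^[k] x₀) (f.symm^[n] x₀) = dist x₀ (f.symm^[n-k] x₀) := by
    intro k n hkn
    conv_lhs => rw [show n = k + (n - k) by omega, Function.iterate_add_apply]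
    exact (hiso k).dist_eq _ _
  choose ns hns hkar using karlsson_selection' (fun n => dist x₀ (f.symm^[n] x₀)) τ hτ
  set K : Set (X → ℝ) := Set.pi Set.univ (fun y : X => Set.Icc (-(dist y x₀)) (dist y x₀))
    with hKdef
  have hKcomp : IsCompact K := isCompact_univ_pi fun y => isCompact_Icc
  have hsub : Set.range Φ ⊆ K := by
    rintro _ ⟨x, rfl⟩ y _
    have := abs_dist_sub_le y x₀ x
    exact ⟨(abs_le.1 this).1, (abs_le.1 this).2⟩
  have hScomp : IsCompact (closure (Set.range Φ)) :=
    hKcomp.of_isClosed_subset isClosed_closure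
      (closure_minimal hsub (isClosed_set_pi fun y _ => isClosed_Icc))
  set u : ℕ → (X → ℝ) := fun m => Φ (f.symm^[ns m] x₀) with hu
  have huS : ∀ m, u m ∈ closure (Set.range Φ) := fun m => subset_closure ⟨_, rfl⟩
  have hF : Filter.map u atTop ≤ 𝓟 (closure (Set.range Φ)) :=
    le_principal_iff.2 (mem_map.2 (Eventually.of_forall huS))
  obtain ⟨h, hhS, hcl⟩ := hScomp.exists_clusterPt hF
  refine ⟨h, hhS, ?_⟩
  intro k hk
  have key : ∀ M : ℕ, h (f.symm^[k] x₀) ≤ -(τ - 1/((M:ℝ)+1)) * k := by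
    intro M
    set s : Set (X → ℝ) := {g : X → ℝ | g (f.symm^[k] x₀) ≤ -(τ - 1/((M:ℝ)+1)) * k} with hs
    have hclosed : IsClosed s := isClosed_le (continuous_apply _) continuous_const
    have hev : ∀ᶠ m in atTop, u m ∈ s := by
      filter_upwards [eventually_ge_atTop (max k M)] with m hm
      have hkm : k ≤ m := le_trans (le_max_left _ _) hm
      have hMm : M ≤ m := le_trans (le_max_right _ _) hm
      have hkn : k ≤ ns m := le_trans hkm (hns m)
      have h2 := hkar m (ns m - k) (by omega)
      have hcast : ((ns m : ℝ) - ((ns m - k : ℕ) : ℝ)) = (k : ℝ) := by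
        rw [Nat.cast_sub hkn]; ring
      rw [hcast] at h2
      have hmon : (1 : ℝ)/((m:ℝ)+1) ≤ 1/((M:ℝ)+1) := by
        apply one_div_le_one_div_of_le (by positivity)
        have : (M:ℝ) ≤ m := by exact_mod_cast hMm
        linarith
      have hkpos : (0:ℝ) ≤ k := Nat.cast_nonneg k
      have heq : u m (f.symm^[k] x₀)
          = dist x₀ (f.symm^[ns m - k] x₀) - dist x₀ (f.symm^[ns m] x₀) := by
        simp only [hu, hΦ, hdist k (ns m) hkn]
      show u m (f.symm^[k] x₀) ≤ -(τ - 1/((M:ℝ)+1)) * k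
      rw [heq]
      nlinarith
    have hmem : s ∈ Filter.map u atTop := mem_map.2 hev
    have : h ∈ closure s :=
      mem_closure_iff_clusterPt.2 (hcl.mono (le_principal_iff.2 hmem))
    rwa [hclosed.closure_eq] at this
  have hlim : Tendsto (fun M : ℕ => -(τ - 1/((M:ℝ)+1)) * (k:ℝ)) atTop (nhds (-τ * k)) := by
    have h0 : Tendsto (fun M : ℕ => (1:ℝ)/((M:ℝ)+1)) atTop (nhds 0) :=
      tendsto_one_div_add_atTop_nhds_zero_nat
    have := (((tendsto_const_nhds (x := τ) (f := atTop)).sub h0).neg).mul_const (k:ℝ)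
    simpa using this
  exact ge_of_tendsto' hlim key
end
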